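/- With T_n = τ_2 + ⋯ + τ_n, 𝒮_n = τ̃_1 + T_n and S_n = τ_1 + T_n, where τ̃_1 and τ_1 are each independent of (τ_2, …, τ_n), the total variation distance satisfies d_TV(𝒮_n, S_n) ≤ (E[τ̃_1] + E[τ_1])·d_TV(T_n, T_n + 1). -/

import Mathlib

open MeasureTheory ProbabilityTheory Finset

noncomputable section

variable {Ω : Type*}

/-- `T n = τ 2 + ⋯ + τ n`. -/
def partialT (τ : ℕ → Ω → ℕ) (n : ℕ) (ω : Ω) : ℕ := ∑ k ∈ Finset.Icc 2 n, τ k ω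

/-- Total variation distance between (the distributions of) two integer-valued
random variables: `sup_{B ⊆ ℤ} |P(X ∈ B) − P(Y ∈ B)|`. -/
def dTV [MeasurableSpace Ω] (μ : Measure Ω) (X Y : Ω → ℕ) : ℝ :=
  ⨆ B : Set ℤ,
    |(μ ((fun ω => (X ω : ℤ)) ⁻¹' B)).toReal - (μ ((fun ω => (Y ω : ℤ)) ⁻¹' B)).toReal|

open scoped ENNReal

namespace DTVAux

variable {Ω : Type*} [MeasurableSpace Ω] (μ : Measure Ω) [IsProbabilityMeasure μ]

lemma tsum_preimage_singleton (X : Ω → ℕ) (hX : Measurable X) :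
    ∑' j : ℕ, μ (X ⁻¹' {j}) = 1 := by
  have hdisj : Pairwise (Function.onFun Disjoint fun j : ℕ => X ⁻¹' {j}) := by
    intro i j hij
    rw [Function.onFun, Set.disjoint_left]
    rintro ω hi hj
    simp only [Set.mem_preimage, Set.mem_singleton_iff] at hi hj
    exact hij (hi.symm.trans hj)
  rw [← measure_iUnion hdisj (fun j => hX (measurableSet_singleton j))]
  have h : (⋃ j : ℕ, X ⁻¹' {j}) = Set.univ := by ext ω; simp
  rw [h, measure_univ]

lemma measure_add_eq_tsum (X T : Ω → ℕ) (hX : Measurable X) (hT : Measurable T)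
    (hind : IndepFun X T μ) (B : Set ℤ) :
    μ ((fun ω => ((X ω + T ω : ℕ) : ℤ)) ⁻¹' B)
      = ∑' j : ℕ, μ (X ⁻¹' {j}) * μ ((fun ω => ((T ω + j : ℕ) : ℤ)) ⁻¹' B) := by
  have hset : (fun ω => ((X ω + T ω : ℕ) : ℤ)) ⁻¹' B
      = ⋃ j : ℕ, X ⁻¹' {j} ∩ T ⁻¹' {m : ℕ | ((m + j : ℕ) : ℤ) ∈ B} := by
    ext ω
    simp only [Set.mem_preimage, Set.mem_iUnion, Set.mem_inter_iff, Set.mem_singleton_iff,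
      Set.mem_setOf_eq]
    constructor
    · intro h; exact ⟨X ω, rfl, by rwa [add_comm]⟩
    · rintro ⟨j, rfl, h⟩; rwa [add_comm]
  have hdisj : Pairwise (Function.onFun Disjoint
      fun j : ℕ => X ⁻¹' {j} ∩ T ⁻¹' {m : ℕ | ((m + j : ℕ) : ℤ) ∈ B}) := by
    intro i j hij
    rw [Function.onFun, Set.disjoint_left]
    rintro ω ⟨hi, _⟩ ⟨hj, _⟩
    simp only [Set.mem_preimage, Set.mem_singleton_iff] at hi hj
    exact hij (hi.symm.trans hj)
  rw [hset, measure_iUnion hdisj (fun j =>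
    (hX (measurableSet_singleton j)).inter (hT ((Set.to_countable _).measurableSet)))]
  refine tsum_congr fun j => ?_
  rw [hind.measure_inter_preimage_eq_mul _ _ (measurableSet_singleton j)
    ((Set.to_countable _).measurableSet)]
  rfl

lemma dTV_bddAbove (X Y : Ω → ℕ) :
    BddAbove (Set.range fun B : Set ℤ =>
      |(μ ((fun ω => (X ω : ℤ)) ⁻¹' B)).toReal - (μ ((fun ω => (Y ω : ℤ)) ⁻¹' B)).toReal|) := by
  refine ⟨1, ?_⟩
  rintro x ⟨B, rfl⟩
  have h1 : (μ ((fun ω => (X ω : ℤ)) ⁻¹' B)).toReal ≤ 1 := by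
    simpa using ENNReal.toReal_mono ENNReal.one_ne_top (prob_le_one (μ := μ))
  have h2 : (μ ((fun ω => (Y ω : ℤ)) ⁻¹' B)).toReal ≤ 1 := by
    simpa using ENNReal.toReal_mono ENNReal.one_ne_top (prob_le_one (μ := μ))
  have h3 : (0:ℝ) ≤ (μ ((fun ω => (X ω : ℤ)) ⁻¹' B)).toReal := ENNReal.toReal_nonneg
  have h4 : (0:ℝ) ≤ (μ ((fun ω => (Y ω : ℤ)) ⁻¹' B)).toReal := ENNReal.toReal_nonneg
  rw [abs_sub_le_iff]
  constructor <;> linarith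

end DTVAux

namespace DTVAux2
open DTVAux
variable {Ω : Type*} [MeasurableSpace Ω] (μ : Measure Ω) [IsProbabilityMeasure μ]

lemma step_le (T : Ω → ℕ) (B : Set ℤ) (j : ℕ) :
    |(μ ((fun ω => ((T ω + (j + 1) : ℕ) : ℤ)) ⁻¹' B)).toReal
      - (μ ((fun ω => ((T ω + j : ℕ) : ℤ)) ⁻¹' B)).toReal|
      ≤ dTV μ T (fun ω => T ω + 1) := by
  have h := le_ciSup (dTV_bddAbove μ T (fun ω => T ω + 1)) ((fun z : ℤ => z + (j:ℤ)) ⁻¹' B)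
  have e1 : (fun ω => (T ω : ℤ)) ⁻¹' ((fun z : ℤ => z + (j:ℤ)) ⁻¹' B)
      = (fun ω => ((T ω + j : ℕ) : ℤ)) ⁻¹' B := by
    ext ω; simp [Set.mem_preimage]
  have e2 : (fun ω => ((T ω + 1 : ℕ) : ℤ)) ⁻¹' ((fun z : ℤ => z + (j:ℤ)) ⁻¹' B)
      = (fun ω => ((T ω + (j + 1) : ℕ) : ℤ)) ⁻¹' B := by
    have hcast : ∀ ω : Ω, ((T ω + 1 : ℕ) : ℤ) + (j : ℤ) = ((T ω + (j + 1) : ℕ) : ℤ) := by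
      intro ω; push_cast; ring
    ext ω
    simp only [Set.mem_preimage, hcast ω]
  rw [e1, e2] at h
  rw [abs_sub_comm]
  exact h.trans_eq rfl

lemma iter_le (T : Ω → ℕ) (B : Set ℤ) (j : ℕ) :
    |(μ ((fun ω => ((T ω + j : ℕ) : ℤ)) ⁻¹' B)).toReal
      - (μ ((fun ω => (T ω : ℤ)) ⁻¹' B)).toReal|
      ≤ j * dTV μ T (fun ω => T ω + 1) := by
  induction j with
  | zero => simp
  | succ k ih =>
      have h1 := step_le μ T B k
      have h2 := abs_sub_le
        ((μ ((fun ω => ((T ω + (k + 1) : ℕ) : ℤ)) ⁻¹' B)).toReal)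
        ((μ ((fun ω => ((T ω + k : ℕ) : ℤ)) ⁻¹' B)).toReal)
        ((μ ((fun ω => (T ω : ℤ)) ⁻¹' B)).toReal)
      push_cast
      calc _ ≤ _ := h2
      _ ≤ dTV μ T (fun ω => T ω + 1) + k * dTV μ T (fun ω => T ω + 1) := add_le_add h1 ih
      _ = (k + 1) * dTV μ T (fun ω => T ω + 1) := by ring

lemma lintegral_coe_eq (X : Ω → ℕ) (hX : Measurable X) :
    ∫⁻ ω, (X ω : ℝ≥0∞) ∂μ = ∑' j : ℕ, (j : ℝ≥0∞) * μ (X ⁻¹' {j}) := by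
  have hc : Measurable fun n : ℕ => (n : ℝ≥0∞) := measurable_from_top
  rw [← lintegral_map hc hX, lintegral_countable' (μ := μ.map X) (fun n : ℕ => (n : ℝ≥0∞))]
  refine tsum_congr fun j => ?_
  rw [Measure.map_apply hX (measurableSet_singleton j), mul_comm]

lemma integral_coe_eq (X : Ω → ℕ) (hX : Measurable X)
    (hint : Integrable (fun ω => (X ω : ℝ)) μ) :
    (∫ ω, (X ω : ℝ) ∂μ = ∑' j : ℕ, (j : ℝ) * (μ (X ⁻¹' {j})).toReal)
    ∧ Summable (fun j : ℕ => (j : ℝ) * (μ (X ⁻¹' {j})).toReal) := by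
  have hfin : ∫⁻ ω, (X ω : ℝ≥0∞) ∂μ ≠ ⊤ := by
    have h2 : ∫⁻ ω, (‖(X ω : ℝ)‖₊ : ℝ≥0∞) ∂μ < ⊤ := hint.2
    refine ne_of_lt (lt_of_le_of_lt (le_of_eq ?_) h2)
    refine lintegral_congr fun ω => ?_
    simp
  rw [lintegral_coe_eq μ X hX] at hfin
  have hterm : ∀ j : ℕ, (j : ℝ≥0∞) * μ (X ⁻¹' {j}) ≠ ⊤ :=
    fun j => ne_top_of_le_ne_top hfin (ENNReal.le_tsum j)
  constructor
  · rw [integral_eq_lintegral_of_nonneg_ae (ae_of_all _ fun ω => by positivity)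
      hint.1]
    have e : ∫⁻ ω, ENNReal.ofReal ((X ω : ℝ)) ∂μ = ∫⁻ ω, (X ω : ℝ≥0∞) ∂μ := by
      refine lintegral_congr fun ω => ?_
      simp
    rw [e, lintegral_coe_eq μ X hX, ENNReal.tsum_toReal_eq hterm]
    refine tsum_congr fun j => ?_
    simp [ENNReal.toReal_mul]
  · have hs := ENNReal.summable_toReal hfin
    refine hs.congr fun j => ?_
    simp [ENNReal.toReal_mul]

end DTVAux2

namespace DTVAux3
open DTVAux DTVAux2
variable {Ω : Type*} [MeasurableSpace Ω] (μ : Measure Ω) [IsProbabilityMeasure μ]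

set_option maxHeartbeats 1000000 in
lemma main_bound (X T : Ω → ℕ) (hX : Measurable X) (hT : Measurable T)
    (hind : IndepFun X T μ) (hint : Integrable (fun ω => (X ω : ℝ)) μ) (B : Set ℤ) :
    |(μ ((fun ω => ((X ω + T ω : ℕ) : ℤ)) ⁻¹' B)).toReal
      - (μ ((fun ω => (T ω : ℤ)) ⁻¹' B)).toReal|
      ≤ (∫ ω, (X ω : ℝ) ∂μ) * dTV μ T (fun ω => T ω + 1) := by
  set D := dTV μ T (fun ω => T ω + 1) with hD
  set p : ℕ → ℝ := fun j => (μ (X ⁻¹' {j})).toReal with hp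
  set f : ℕ → ℝ := fun j => (μ ((fun ω => ((T ω + j : ℕ) : ℤ)) ⁻¹' B)).toReal with hf
  have hp_nonneg : ∀ j, 0 ≤ p j := fun j => ENNReal.toReal_nonneg
  have hf_nonneg : ∀ j, 0 ≤ f j := fun j => ENNReal.toReal_nonneg
  have hf_le_one : ∀ j, f j ≤ 1 := fun j => by
    simpa using ENNReal.toReal_mono ENNReal.one_ne_top (prob_le_one (μ := μ))
  -- ∑ p = 1
  have hp_tsum_top : ∑' j : ℕ, μ (X ⁻¹' {j}) = 1 := tsum_preimage_singleton μ X hX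
  have hp_summable : Summable p :=
    (ENNReal.summable_toReal (by rw [hp_tsum_top]; exact ENNReal.one_ne_top))
  have hp_tsum : ∑' j, p j = 1 := by
    rw [hp, ← ENNReal.tsum_toReal_eq (fun j => measure_ne_top μ _), hp_tsum_top]
    simp
  -- P(X+T ∈ B) = ∑ p j * f j
  have hPB : (μ ((fun ω => ((X ω + T ω : ℕ) : ℤ)) ⁻¹' B)).toReal = ∑' j, p j * f j := by
    rw [measure_add_eq_tsum μ X T hX hT hind B,
      ENNReal.tsum_toReal_eq (fun j => ENNReal.mul_ne_top (measure_ne_top μ _) (measure_ne_top μ _))]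
    refine tsum_congr fun j => ENNReal.toReal_mul
  -- f 0 identification
  have hf0 : (μ ((fun ω => (T ω : ℤ)) ⁻¹' B)).toReal = f 0 := by
    rw [hf]; norm_num
  have hf0' : f 0 = ∑' j, p j * f 0 := by
    rw [tsum_mul_right, hp_tsum, one_mul]
  -- summabilities
  have hsum1 : Summable (fun j => p j * f j) :=
    Summable.of_nonneg_of_le (fun j => mul_nonneg (hp_nonneg j) (hf_nonneg j))
      (fun j => by nlinarith [hp_nonneg j, hf_le_one j, hf_nonneg j]) hp_summable
  have hsum2 : Summable (fun j => p j * f 0) := hp_summable.mul_right _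
  have hE := integral_coe_eq μ X hX hint
  have hsum3 : Summable (fun j : ℕ => ((j : ℝ) * p j) * D) := hE.2.mul_right D
  have hstep : ∀ j, |f j - f 0| ≤ j * D := fun j => by
    have := iter_le μ T B j
    rw [← hf0]
    exact this
  have habs_le : ∀ j, |p j * (f j - f 0)| ≤ ((j:ℝ) * p j) * D := fun j => by
    rw [abs_mul, abs_of_nonneg (hp_nonneg j)]
    calc p j * |f j - f 0| ≤ p j * ((j:ℝ) * D) :=
          mul_le_mul_of_nonneg_left (hstep j) (hp_nonneg j)
      _ = ((j:ℝ) * p j) * D := by ring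
  have hsum4 : Summable (fun j => |p j * (f j - f 0)|) :=
    Summable.of_nonneg_of_le (fun j => abs_nonneg _) habs_le hsum3
  have hsum5 : Summable (fun j => p j * (f j - f 0)) := hsum4.of_abs
  calc |(μ ((fun ω => ((X ω + T ω : ℕ) : ℤ)) ⁻¹' B)).toReal
        - (μ ((fun ω => (T ω : ℤ)) ⁻¹' B)).toReal|
      = |∑' j, p j * (f j - f 0)| := by
        rw [hPB, hf0]
        congr 1
        calc (∑' j, p j * f j) - f 0
            = (∑' j, p j * f j) - (∑' j, p j * f 0) := by rw [← hf0']
          _ = ∑' j, (p j * f j - p j * f 0) := (Summable.tsum_sub hsum1 hsum2).symm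
          _ = ∑' j, p j * (f j - f 0) := tsum_congr fun j => by ring
    _ ≤ ∑' j, |p j * (f j - f 0)| := by
        have h := norm_tsum_le_tsum_norm (f := fun j => p j * (f j - f 0))
          (by simpa only [Real.norm_eq_abs] using hsum4)
        simpa only [Real.norm_eq_abs] using h
    _ ≤ ∑' j : ℕ, ((j:ℝ) * p j) * D := Summable.tsum_le_tsum habs_le hsum4 hsum3
    _ = (∑' j : ℕ, (j:ℝ) * p j) * D := tsum_mul_right
    _ = (∫ ω, (X ω : ℝ) ∂μ) * D := by rw [hE.1]

end DTVAux3


/-- With `T n = τ 2 + ⋯ + τ n`, `𝒮 n = τ̃₁ + T n` and `S n = τ 1 + T n`,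
where `τ̃₁` and `τ 1` are each independent of `(τ 2, …, τ n)`, one has
`d_TV(𝒮 n, S n) ≤ (E τ̃₁ + E τ 1) ⬝ d_TV(T n, T n + 1)`. -/
theorem dTV_delayed_vs_ordinary
    {Ω : Type*} [MeasurableSpace Ω] (μ : Measure Ω) [IsProbabilityMeasure μ]
    (τt : Ω → ℕ) (τ : ℕ → Ω → ℕ)
    -- measurability and positivity
    (hτtm : Measurable τt) (hτm : ∀ i, Measurable (τ i))
    (hτtpos : ∀ ω, 1 ≤ τt ω) (hτpos : ∀ i ω, 1 ≤ τ i ω)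
    -- the τ's are i.i.d.
    (hindep : iIndepFun τ μ)
    (hτid : ∀ i, IdentDistrib (τ i) (τ 1) μ μ)
    -- τ̃₁ is independent of the family (τ_i)_{i ≥ 2}
    (hτtindep : IndepFun τt (fun ω => fun i : ℕ => τ (i + 2) ω) μ)
    -- finite means
    (hτtint : Integrable (fun ω => (τt ω : ℝ)) μ)
    (hτint : Integrable (fun ω => (τ 1 ω : ℝ)) μ) :
    ∀ n : ℕ,
      dTV μ (fun ω => τt ω + partialT τ n ω) (fun ω => τ 1 ω + partialT τ n ω) ≤
        ((∫ ω, (τt ω : ℝ) ∂μ) + ∫ ω, (τ 1 ω : ℝ) ∂μ) *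
          dTV μ (partialT τ n) (fun ω => partialT τ n ω + 1) := by
  intro n
  set T : Ω → ℕ := partialT τ n with hT
  have hTm : Measurable T := by
    rw [hT]; unfold partialT
    exact Finset.measurable_sum _ (fun k _ => hτm k)
  have h1 : IndepFun τt T μ := by
    have hg : Measurable fun v : ℕ → ℕ => ∑ k ∈ Finset.Icc 2 n, v (k - 2) :=
      Finset.measurable_sum _ (fun k _ => measurable_pi_apply (k - 2))
    have h := hτtindep.comp measurable_id hg
    have he : ((fun v : ℕ → ℕ => ∑ k ∈ Finset.Icc 2 n, v (k - 2)) ∘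
        (fun ω => fun i : ℕ => τ (i + 2) ω)) = T := by
      funext ω
      rw [hT]; unfold partialT
      simp only [Function.comp_apply]
      refine Finset.sum_congr rfl fun k hk => ?_
      rw [Nat.sub_add_cancel (Finset.mem_Icc.mp hk).1]
    rwa [he] at h
  have h2 : IndepFun (τ 1) T μ := by
    have h := (hindep.indepFun_finsetSum_of_notMem hτm
      (s := Finset.Icc 2 n) (i := 1) (by simp)).symm
    have he : (∑ j ∈ Finset.Icc 2 n, τ j) = T := by
      funext ω
      rw [hT]; unfold partialT
      simp [Finset.sum_apply]
    rwa [he] at h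
  unfold dTV
  refine ciSup_le fun B => ?_
  have hb1 := DTVAux3.main_bound μ τt T hτtm hTm h1 hτtint B
  have hb2 := DTVAux3.main_bound μ (τ 1) T (hτm 1) hTm h2 hτint B
  calc |(μ ((fun ω => ((τt ω + T ω : ℕ) : ℤ)) ⁻¹' B)).toReal
        - (μ ((fun ω => ((τ 1 ω + T ω : ℕ) : ℤ)) ⁻¹' B)).toReal|
      ≤ |(μ ((fun ω => ((τt ω + T ω : ℕ) : ℤ)) ⁻¹' B)).toReal
          - (μ ((fun ω => (T ω : ℤ)) ⁻¹' B)).toReal|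
        + |(μ ((fun ω => (T ω : ℤ)) ⁻¹' B)).toReal
          - (μ ((fun ω => ((τ 1 ω + T ω : ℕ) : ℤ)) ⁻¹' B)).toReal| := abs_sub_le _ _ _
    _ ≤ (∫ ω, (τt ω : ℝ) ∂μ) * dTV μ T (fun ω => T ω + 1)
        + (∫ ω, (τ 1 ω : ℝ) ∂μ) * dTV μ T (fun ω => T ω + 1) := by
        refine add_le_add hb1 ?_
        rw [abs_sub_comm]
        exact hb2
    _ = ((∫ ω, (τt ω : ℝ) ∂μ) + ∫ ω, (τ 1 ω : ℝ) ∂μ) * dTV μ T (fun ω => T ω + 1) := by ring
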